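/- For the valuation v on ℂ[x,y] determined by v(y) = 1 and v(q_i) = β_i on the key polynomials (q₀=y, q₁=x, q_{i+1}=q_i^{c_i}+y^{β_ic_i}), with v(q^a) = a₀ + ∑ a_iβ_i on standard monomials, one has inf_{0≠f∈𝔪} v(f)/ord₀(f) = 1 and sup_{0≠f∈𝔪} v(f)/ord₀(f) = α∗ := lim_k β_k/d_k, where d_i = c₁⋯c_{i−1} and 𝔪 = (x,y). -/

import Mathlib

open MvPolynomial Filter

/-- `ord0 f` is the order of vanishing of `f ∈ ℂ[x,y]` at the origin. -/
noncomputable def ord0 (f : MvPolynomial (Fin 2) ℂ) : ℕ :=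
  sInf {k : ℕ | ∃ m ∈ f.support, m 0 + m 1 = k}

/-- For the valuation `v` on `ℂ[x,y]` determined by `v(y) = 1` and `v(q_i) = β_i` on the
key polynomials (`q₀ = y`, `q₁ = x`, `q_{i+1} = q_i^{c_i} + y^{β_i c_i}`), with
`v(q^a) = a₀ + ∑ a_i β_i` on standard monomials, and `v(f)` (resp. `ord₀(f)`) computed as
the minimum over the standard-monomial expansion of `f`, one has
`inf_{0≠f∈𝔪} v(f)/ord₀(f) = 1` and `sup_{0≠f∈𝔪} v(f)/ord₀(f) = α∗ = lim_k β_k/d_k`. -/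
theorem valuation_ratio_inf_sup
    (c e d : ℕ → ℕ) (β : ℕ → ℚ) (q : ℕ → MvPolynomial (Fin 2) ℂ)
    (v : MvPolynomial (Fin 2) ℂ → ℝ) (α : ℝ)
    (hc : ∀ i ≥ 1, 1 < c i)
    (hβ1 : 1 < β 1)
    (hβint : ∀ i ≥ 1, (e i : ℚ) = (c i : ℚ) * β i)
    (hβgrow : ∀ i ≥ 1, (c i : ℚ) * β i < β (i + 1))
    (hq0 : q 0 = X 1) (hq1 : q 1 = X 0)
    (hq : ∀ i ≥ 1, q (i + 1) = q i ^ c i + X 1 ^ e i)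
    (hd1 : d 1 = 1) (hd : ∀ i ≥ 1, d (i + 1) = d i * c i)
    (hα : Tendsto (fun k : ℕ => (β k : ℝ) / (d k : ℝ)) atTop (nhds α))
    (hvmon : ∀ (k : ℕ) (a : ℕ → ℕ),
      (∀ j : ℕ, 1 ≤ j → j ≤ k → a j ≤ c j - 1) → (∀ j : ℕ, k < j → a j = 0) →
      v (∏ i ∈ Finset.range (k + 1), q i ^ a i) =
        (a 0 : ℝ) + ∑ i ∈ Finset.Icc 1 k, (a i : ℝ) * (β i : ℝ))
    (hordmon : ∀ (k : ℕ) (a : ℕ → ℕ),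
      (∀ j : ℕ, 1 ≤ j → j ≤ k → a j ≤ c j - 1) → (∀ j : ℕ, k < j → a j = 0) →
      ord0 (∏ i ∈ Finset.range (k + 1), q i ^ a i) =
        a 0 + ∑ i ∈ Finset.Icc 1 k, a i * d i)
    (hexp : ∀ f : MvPolynomial (Fin 2) ℂ, f ≠ 0 →
      ∃ (k : ℕ) (S : Finset (ℕ → ℕ)) (hS : S.Nonempty) (b : (ℕ → ℕ) → ℂ),
        (∀ a ∈ S, ∀ j : ℕ, 1 ≤ j → j ≤ k → a j ≤ c j - 1) ∧
        (∀ a ∈ S, ∀ j : ℕ, k < j → a j = 0) ∧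
        (∀ a ∈ S, b a ≠ 0) ∧
        f = ∑ a ∈ S, b a • ∏ i ∈ Finset.range (k + 1), q i ^ a i ∧
        v f = S.inf' hS (fun a => v (∏ i ∈ Finset.range (k + 1), q i ^ a i)) ∧
        ord0 f = S.inf' hS fun a => ord0 (∏ i ∈ Finset.range (k + 1), q i ^ a i)) :
    sInf {r : ℝ | ∃ f : MvPolynomial (Fin 2) ℂ, f ≠ 0 ∧
        MvPolynomial.coeff 0 f = 0 ∧ r = v f / (ord0 f : ℝ)} = 1 ∧
      sSup {r : ℝ | ∃ f : MvPolynomial (Fin 2) ℂ, f ≠ 0 ∧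
        MvPolynomial.coeff 0 f = 0 ∧ r = v f / (ord0 f : ℝ)} = α := by
  -- basic positivity facts
  have hd_pos : ∀ i, 1 ≤ i → 0 < d i := by
    intro i hi
    induction i, hi using Nat.le_induction with
    | base => simp [hd1]
    | succ n hn ih =>
      rw [hd n hn]
      exact Nat.mul_pos ih (lt_trans one_pos (hc n hn))
  have hβgt1 : ∀ i, 1 ≤ i → 1 < β i := by
    intro i hi
    induction i, hi using Nat.le_induction with
    | base => exact hβ1
    | succ n hn ih =>
      have hc1 : (1:ℚ) ≤ (c n : ℚ) := by
        exact_mod_cast le_of_lt (hc n hn)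
      have : (1:ℚ) * 1 ≤ (c n : ℚ) * β n := by
        apply mul_le_mul hc1 (le_of_lt ih) (by norm_num) (by linarith)
      linarith [hβgrow n hn]
  have hdβ : ∀ i, 1 ≤ i → (d i : ℚ) < β i := by
    intro i hi
    induction i, hi using Nat.le_induction with
    | base => simpa [hd1] using hβ1
    | succ n hn ih =>
      have hc0 : (0:ℚ) < (c n : ℚ) := by
        exact_mod_cast lt_trans one_pos (hc n hn)
      have : ((d (n+1) : ℚ)) = (d n : ℚ) * (c n : ℚ) := by
        rw [hd n hn]; push_cast; ring
      rw [this]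
      have := hβgrow n hn
      nlinarith
  -- monotonicity of the ratios
  have hstep : ∀ k, 1 ≤ k → (β k : ℝ) / (d k : ℝ) ≤ (β (k+1) : ℝ) / (d (k+1) : ℝ) := by
    intro k hk
    have hdk : (0:ℝ) < (d k : ℝ) := by exact_mod_cast hd_pos k hk
    have hck : (0:ℝ) < (c k : ℝ) := by
      exact_mod_cast lt_trans one_pos (hc k hk)
    have hdk1 : ((d (k+1) : ℝ)) = (d k : ℝ) * (c k : ℝ) := by
      rw [hd k hk]; push_cast; ring
    have hgrow : (c k : ℝ) * (β k : ℝ) ≤ (β (k+1) : ℝ) := by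
      have := hβgrow k hk
      have : ((c k : ℚ) * β k : ℚ) ≤ β (k+1) := le_of_lt this
      exact_mod_cast this
    rw [hdk1, div_le_div_iff₀ hdk (by positivity)]
    calc (β k : ℝ) * ((d k : ℝ) * (c k : ℝ)) = ((c k : ℝ) * (β k : ℝ)) * (d k : ℝ) := by ring
    _ ≤ (β (k+1) : ℝ) * (d k : ℝ) := by
        apply mul_le_mul_of_nonneg_right hgrow (le_of_lt hdk)
  have hmono : ∀ i, 1 ≤ i → ∀ k, i ≤ k → (β i : ℝ) / (d i : ℝ) ≤ (β k : ℝ) / (d k : ℝ) := by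
    intro i hi k hk
    induction k, hk using Nat.le_induction with
    | base => exact le_refl _
    | succ n hn ih => exact le_trans ih (hstep n (le_trans hi hn))
  have hβα : ∀ i, 1 ≤ i → (β i : ℝ) ≤ α * (d i : ℝ) := by
    intro i hi
    have hdi : (0:ℝ) < (d i : ℝ) := by exact_mod_cast hd_pos i hi
    have hle : (β i : ℝ) / (d i : ℝ) ≤ α := by
      refine ge_of_tendsto hα ?_
      filter_upwards [eventually_ge_atTop i] with k hk
      exact hmono i hi k hk
    calc (β i : ℝ) = ((β i : ℝ) / (d i : ℝ)) * (d i : ℝ) := by field_simp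
    _ ≤ α * (d i : ℝ) := mul_le_mul_of_nonneg_right hle (le_of_lt hdi)
  have hα1 : (1:ℝ) ≤ α := by
    have h1 := hβα 1 le_rfl
    have : (1:ℝ) < (β 1 : ℝ) := by exact_mod_cast hβ1
    simp [hd1] at h1
    linarith
  -- the key polynomials are nonzero with zero constant term
  have he_pos : ∀ i, 1 ≤ i → 0 < e i := by
    intro i hi
    have h1 := hβint i hi
    have h2 := hβgt1 i hi
    have hc1 : (1:ℚ) ≤ (c i : ℚ) := by exact_mod_cast le_of_lt (hc i hi)
    have : (0:ℚ) < (e i : ℚ) := by rw [h1]; nlinarith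
    exact_mod_cast this
  have hcc1 : ∀ k, 1 ≤ k → constantCoeff (q k) = 0 := by
    intro k hk
    induction k, hk using Nat.le_induction with
    | base => rw [hq1]; simp
    | succ n hn ih =>
      have hcn : c n ≠ 0 := by have := hc n hn; omega
      have hen : e n ≠ 0 := by have := he_pos n hn; omega
      rw [hq n hn, map_add, map_pow, map_pow, ih, constantCoeff_X,
        zero_pow hcn, zero_pow hen, add_zero]
  have hcc : ∀ k, constantCoeff (q k) = 0 := by
    intro k
    match k with
    | 0 => rw [hq0]; simp
    | (n+1) => exact hcc1 (n+1) (by omega)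
  have hqne : ∀ k, 1 ≤ k → q k ≠ 0 := by
    have heval : ∀ k, 1 ≤ k →
        eval (fun i : Fin 2 => if i = 0 then (1:ℂ) else 0) (q k) = 1 := by
      intro k hk
      induction k, hk using Nat.le_induction with
      | base => rw [hq1]; simp
      | succ n hn ih =>
        have hen : e n ≠ 0 := by have := he_pos n hn; omega
        rw [hq n hn, map_add, map_pow, map_pow, ih, eval_X]
        have h2 : ((1:Fin 2)) ≠ 0 := by decide
        rw [if_neg h2, one_pow, zero_pow hen, add_zero]
    intro k hk h0
    have := heval k hk
    rw [h0] at this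
    simp at this
  -- order of vanishing is positive on the maximal ideal
  have hord_pos : ∀ f : MvPolynomial (Fin 2) ℂ, f ≠ 0 → coeff 0 f = 0 → 1 ≤ ord0 f := by
    intro f hf0 hfc
    obtain ⟨m, hm⟩ := MvPolynomial.support_nonempty.mpr hf0
    have hne : {k : ℕ | ∃ m ∈ f.support, m 0 + m 1 = k}.Nonempty :=
      ⟨m 0 + m 1, m, hm, rfl⟩
    have hmem : ord0 f ∈ {k : ℕ | ∃ m ∈ f.support, m 0 + m 1 = k} := Nat.sInf_mem hne
    obtain ⟨m', hm', hsum⟩ := hmem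
    by_contra h
    push_neg at h
    have h0 : ord0 f = 0 := by omega
    rw [h0] at hsum
    have hm0 : m' = 0 := by
      ext i
      fin_cases i <;> simp <;> omega
    rw [hm0] at hm'
    rw [MvPolynomial.mem_support_iff] at hm'
    exact hm' hfc
  -- every ratio in the set lies in [1, α]
  have hub : ∀ r ∈ {r : ℝ | ∃ f : MvPolynomial (Fin 2) ℂ, f ≠ 0 ∧
      MvPolynomial.coeff 0 f = 0 ∧ r = v f / (ord0 f : ℝ)}, 1 ≤ r ∧ r ≤ α := by
    rintro r ⟨f, hf0, hfc, rfl⟩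
    obtain ⟨k, S, hS, b, h1, h2, h3, hsum, hvf, hof⟩ := hexp f hf0
    set ordfn : (ℕ → ℕ) → ℕ := fun a => ord0 (∏ i ∈ Finset.range (k + 1), q i ^ a i)
      with hordfn
    set vfn : (ℕ → ℕ) → ℝ := fun a => v (∏ i ∈ Finset.range (k + 1), q i ^ a i) with hvfn
    have hkey : ∀ a ∈ S, (ordfn a : ℝ) ≤ vfn a ∧ vfn a ≤ α * (ordfn a : ℝ) := by
      intro a ha
      have hv := hvmon k a (h1 a ha) (h2 a ha)
      have ho := hordmon k a (h1 a ha) (h2 a ha)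
      rw [hordfn, hvfn]
      simp only []
      rw [hv, ho]
      push_cast
      constructor
      · apply add_le_add_right
        apply Finset.sum_le_sum
        intro i hi
        rw [Finset.mem_Icc] at hi
        have := hdβ i hi.1
        have : (d i : ℝ) ≤ (β i : ℝ) := by exact_mod_cast le_of_lt this
        exact mul_le_mul_of_nonneg_left this (by positivity)
      · rw [mul_add, Finset.mul_sum]
        apply add_le_add
        · have h00 : (0:ℝ) ≤ (a 0 : ℝ) := by positivity
          nlinarith
        · apply Finset.sum_le_sum
          intro i hi
          rw [Finset.mem_Icc] at hi
          have := hβα i hi.1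
          calc (a i : ℝ) * (β i : ℝ) ≤ (a i : ℝ) * (α * (d i : ℝ)) :=
            mul_le_mul_of_nonneg_left this (by positivity)
          _ = α * ((a i : ℝ) * (d i : ℝ)) := by ring
    have hop : (0:ℝ) < (ord0 f : ℝ) := by
      exact_mod_cast hord_pos f hf0 hfc
    have hvlb : (ord0 f : ℝ) ≤ v f := by
      rw [hvf]
      apply Finset.le_inf'
      intro a ha
      have h4 : ord0 f ≤ ordfn a := hof ▸ Finset.inf'_le _ ha
      calc (ord0 f : ℝ) ≤ (ordfn a : ℝ) := by exact_mod_cast h4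
      _ ≤ vfn a := (hkey a ha).1
    have hvub : v f ≤ α * (ord0 f : ℝ) := by
      obtain ⟨a0, ha0, he0⟩ := Finset.exists_mem_eq_inf' hS ordfn
      have ho0 : ord0 f = ordfn a0 := by rw [hof]; exact he0
      calc v f ≤ vfn a0 := hvf ▸ Finset.inf'_le _ ha0
      _ ≤ α * (ordfn a0 : ℝ) := (hkey a0 ha0).2
      _ = α * (ord0 f : ℝ) := by rw [ho0]
    constructor
    · rw [le_div_iff₀ hop]; linarith
    · rw [div_le_iff₀ hop]; exact hvub
  -- membership of 1 (via f = y) and of βₖ/dₖ (via f = qₖ)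
  have hmemk : ∀ k, 1 ≤ k → ((β k : ℝ) / (d k : ℝ)) ∈ {r : ℝ | ∃ f : MvPolynomial (Fin 2) ℂ,
      f ≠ 0 ∧ MvPolynomial.coeff 0 f = 0 ∧ r = v f / (ord0 f : ℝ)} := by
    intro k hk
    refine ⟨q k, hqne k hk, by rw [← constantCoeff_eq]; exact hcc k, ?_⟩
    set a : ℕ → ℕ := fun j => if j = k then 1 else 0 with ha
    have hcon1 : ∀ j : ℕ, 1 ≤ j → j ≤ k → a j ≤ c j - 1 := by
      intro j hj1 hjk
      by_cases hjk' : j = k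
      · subst hjk'
        have := hc j hj1
        simp [ha]
        omega
      · simp [ha, hjk']
    have hcon2 : ∀ j : ℕ, k < j → a j = 0 := by
      intro j hj
      simp [ha]
      omega
    have hprod : ∏ i ∈ Finset.range (k + 1), q i ^ a i = q k := by
      rw [Finset.prod_eq_single_of_mem k (Finset.mem_range.mpr (by omega))]
      · simp [ha]
      · intro i hi hik
        simp [ha, hik]
    have hv := hvmon k a hcon1 hcon2
    have ho := hordmon k a hcon1 hcon2
    rw [hprod] at hv ho
    have hsv : ∑ i ∈ Finset.Icc 1 k, (a i : ℝ) * (β i : ℝ) = (β k : ℝ) := by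
      rw [Finset.sum_eq_single_of_mem k (Finset.mem_Icc.mpr ⟨hk, le_rfl⟩)]
      · simp [ha]
      · intro i hi hik
        simp [ha, hik]
    have hso : ∑ i ∈ Finset.Icc 1 k, a i * d i = d k := by
      rw [Finset.sum_eq_single_of_mem k (Finset.mem_Icc.mpr ⟨hk, le_rfl⟩)]
      · simp [ha]
      · intro i hi hik
        simp [ha, hik]
    have ha0 : a 0 = 0 := if_neg (by omega)
    rw [hv, ho, hsv, hso, ha0]
    norm_num
  have hmem1 : (1:ℝ) ∈ {r : ℝ | ∃ f : MvPolynomial (Fin 2) ℂ,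
      f ≠ 0 ∧ MvPolynomial.coeff 0 f = 0 ∧ r = v f / (ord0 f : ℝ)} := by
    refine ⟨X 1, MvPolynomial.X_ne_zero 1, MvPolynomial.coeff_zero_X 1, ?_⟩
    set a : ℕ → ℕ := fun j => if j = 0 then 1 else 0 with ha
    have hcon1 : ∀ j : ℕ, 1 ≤ j → j ≤ 0 → a j ≤ c j - 1 := by
      intro j hj1 hjk; omega
    have hcon2 : ∀ j : ℕ, 0 < j → a j = 0 := by
      intro j hj; simp [ha]; omega
    have hv := hvmon 0 a hcon1 hcon2
    have ho := hordmon 0 a hcon1 hcon2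
    simp [ha, hq0] at hv ho
    rw [hv, ho]
    norm_num
  constructor
  · apply le_antisymm
    · exact csInf_le ⟨1, fun r hr => (hub r hr).1⟩ hmem1
    · exact le_csInf ⟨1, hmem1⟩ fun r hr => (hub r hr).1
  · apply le_antisymm
    · exact csSup_le ⟨1, hmem1⟩ fun r hr => (hub r hr).2
    · refine le_of_tendsto hα ?_
      filter_upwards [eventually_ge_atTop 1] with k hk
      exact le_csSup ⟨α, fun r hr => (hub r hr).2⟩ (hmemk k hk)
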